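/- Let 1 ≤ p < ∞. There exists a constant c_{N,p} > 0, depending only on N and p, such that for every f ∈ L^p(ℝᴺ), every X ∈ ℝᴺ, and every t > 0 one has |P_t f(X)| ≤ c_{N,p}·V(t)^{−1/p}·‖f‖_{L^p} (ultracontractivity of the Hörmander semigroup). No sign assumption on tr B is needed. -/

import Mathlib

open MeasureTheory Matrix Real
open scoped ENNReal Topology

noncomputable section

/-- The covariance matrix `K(t) = (1/t) ∫₀ᵗ e^{sB} Q e^{sBᵀ} ds`. -/
def hK {N : ℕ} (Q B : Matrix (Fin N) (Fin N) ℝ) (t : ℝ) : Matrix (Fin N) (Fin N) ℝ :=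
  Matrix.of fun i j =>
    (1 / t) * ∫ s in (0:ℝ)..t, (NormedSpace.exp (s • B) * Q * NormedSpace.exp (s • Bᵀ)) i j

/-- The intertwined pseudo-distance `m_t(X,Y) = ⟨K(t)⁻¹(Y - e^{tB}X), Y - e^{tB}X⟩^{1/2}`. -/
def hm {N : ℕ} (Q B : Matrix (Fin N) (Fin N) ℝ) (t : ℝ) (X Y : Fin N → ℝ) : ℝ :=
  Real.sqrt (dotProduct ((hK Q B t)⁻¹.mulVec (Y - (NormedSpace.exp (t • B)).mulVec X))
    (Y - (NormedSpace.exp (t • B)).mulVec X))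

/-- The volume of the unit ball in `ℝᴺ`. -/
def omegaN (N : ℕ) : ℝ := (volume (Metric.ball (0 : EuclideanSpace ℝ (Fin N)) 1)).toReal

/-- The volume function `V(t) = ω_N (det (t K(t)))^{1/2}`. -/
def hV {N : ℕ} (Q B : Matrix (Fin N) (Fin N) ℝ) (t : ℝ) : ℝ :=
  omegaN N * Real.sqrt ((t • hK Q B t).det)

/-- Hörmander's kernel `p(X,Y,t) = (4π)^{-N/2} ω_N V(t)⁻¹ exp(-m_t(X,Y)²/(4t))`. -/
def hkernel {N : ℕ} (Q B : Matrix (Fin N) (Fin N) ℝ) (X Y : Fin N → ℝ) (t : ℝ) : ℝ :=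
  ((4 * π) ^ (-(N : ℝ) / 2) * omegaN N / hV Q B t) * Real.exp (-(hm Q B t X Y) ^ 2 / (4 * t))

/-- The Hörmander semigroup `P_t f(X) = ∫ p(X,Y,t) f(Y) dY`. -/
def hP {N : ℕ} (Q B : Matrix (Fin N) (Fin N) ℝ) (t : ℝ) (f : (Fin N → ℝ) → ℝ)
    (X : Fin N → ℝ) : ℝ :=
  ∫ Y, hkernel Q B X Y t * f Y

/-- The Riesz potential `ℐ_α f(X) = Γ(α/2)⁻¹ ∫₀^∞ t^{α/2-1} P_t f(X) dt`. -/
def riesz {N : ℕ} (Q B : Matrix (Fin N) (Fin N) ℝ) (α : ℝ) (f : (Fin N → ℝ) → ℝ)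
    (X : Fin N → ℝ) : ℝ :=
  (1 / Real.Gamma (α / 2)) * ∫ t in Set.Ioi (0:ℝ), t ^ (α / 2 - 1) * hP Q B t f X

/-- The Poisson semigroup `𝒫_z f(X) = (4π)^{-1/2} ∫₀^∞ z t^{-3/2} e^{-z²/(4t)} P_t f(X) dt`. -/
def poisson {N : ℕ} (Q B : Matrix (Fin N) (Fin N) ℝ) (z : ℝ) (f : (Fin N → ℝ) → ℝ)
    (X : Fin N → ℝ) : ℝ :=
  (4 * π) ^ (-(1:ℝ) / 2) *
    ∫ t in Set.Ioi (0:ℝ), z * t ^ (-(3:ℝ) / 2) * Real.exp (-(z ^ 2) / (4 * t)) * hP Q B t f X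

/-- The Poisson radial maximal function `ℳ* f(X) = sup_{z>0} |𝒫_z f(X)|`. -/
def maxP {N : ℕ} (Q B : Matrix (Fin N) (Fin N) ℝ) (f : (Fin N → ℝ) → ℝ)
    (X : Fin N → ℝ) : ℝ :=
  ⨆ z : {z : ℝ // 0 < z}, |poisson Q B z.1 f X|

/-- The fractional power `(-𝒜)^s f(X) = -(s/Γ(1-s)) ∫₀^∞ t^{-(1+s)} (P_t f(X) - f(X)) dt`. -/
def fracA {N : ℕ} (Q B : Matrix (Fin N) (Fin N) ℝ) (s : ℝ) (f : (Fin N → ℝ) → ℝ)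
    (X : Fin N → ℝ) : ℝ :=
  -(s / Real.Gamma (1 - s)) * ∫ t in Set.Ioi (0:ℝ), t ^ (-(1 + s)) * (hP Q B t f X - f X)

/-- The degenerate Ornstein-Uhlenbeck operator `𝒜 f = tr(Q ∇²f) + ⟨BX, ∇f⟩`. -/
def opA {N : ℕ} (Q B : Matrix (Fin N) (Fin N) ℝ) (f : (Fin N → ℝ) → ℝ)
    (X : Fin N → ℝ) : ℝ :=
  (∑ i, ∑ j, Q i j * fderiv ℝ (fun Y => fderiv ℝ f Y (Pi.single j 1)) X (Pi.single i 1)) +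
    ∑ i, B.mulVec X i * fderiv ℝ f X (Pi.single i 1)

/-!
The kernel `p(X, ·, t)` is a Gaussian centred at `e^{tB} X` whose quadratic form is
`K(t)⁻¹ / (4t)`. Writing `K(t)⁻¹ = Sᵀ S` and substituting `v = S (Y - e^{tB} X)` reduces
`∫ p(X, Y, t)^q dY` to the standard Gaussian integral, giving
`‖p(X, ·, t)‖_q = C_{N,q} V(t)^{1/q - 1}`.
For `p > 1`, Hölder's inequality with the conjugate exponent `q` yields
`|P_t f(X)| ≤ ‖p(X, ·, t)‖_q ‖f‖_p = C_{N,q} V(t)^{-1/p} ‖f‖_p`; for `p = 1` the pointwise bound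
`p(X, Y, t) ≤ (4π)^{-N/2} ω_N / V(t)` suffices.
-/
section Gaussian

open scoped MatrixOrder

variable {ι : Type*} [Fintype ι]

lemma integral_exp_neg_dotProduct_self :
    ∫ v : ι → ℝ, exp (-(v ⬝ᵥ v)) = √(π ^ Fintype.card ι) := by
  have hprod (v : ι → ℝ) : exp (-(v ⬝ᵥ v)) = ∏ i, exp (-1 * v i ^ 2) := by
    simp only [dotProduct, ← Finset.sum_neg_distrib, exp_sum, neg_one_mul, sq]
  simp only [hprod]
  rw [volume_pi, integral_fintype_prod_eq_pow (fun x : ℝ => exp (-1 * x ^ 2)), integral_gaussian,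
    div_one, eq_comm, sqrt_eq_iff_mul_self_eq (by positivity) (by positivity), ← mul_pow,
    mul_self_sqrt pi_pos.le]

variable [DecidableEq ι]

lemma integral_comp_mulVec {E : Type*} [NormedAddCommGroup E] [NormedSpace ℝ E]
    {S : Matrix ι ι ℝ} (hS : S.det ≠ 0) {g : (ι → ℝ) → E} (hg : AEStronglyMeasurable g) :
    ∫ u, g (S *ᵥ u) = |S.det|⁻¹ • ∫ v, g v := by
  have hmap := Real.map_matrix_volume_pi_eq_smul_volume_pi hS
  rw [← abs_inv, ← ENNReal.toReal_ofReal (abs_nonneg S.det⁻¹), ← integral_smul_measure, ← hmap,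
    integral_map (toLin' S).continuous_of_finiteDimensional.aemeasurable
      (hmap ▸ hg.smul_measure _)]
  rfl

theorem integral_exp_neg_mulVec_dotProduct {M : Matrix ι ι ℝ} (hM : M.PosDef) :
    ∫ u : ι → ℝ, exp (-(M *ᵥ u ⬝ᵥ u)) = √(π ^ Fintype.card ι / M.det) := by
  obtain ⟨S, rfl⟩ := CStarAlgebra.nonneg_iff_eq_star_mul_self.mp hM.posSemidef.nonneg
  have hdet : (star S * S).det = S.det ^ 2 := by
    rw [det_mul, star_eq_conjTranspose, det_conjTranspose, star_trivial, sq]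
  have hS : S.det ≠ 0 := by
    have := hM.det_pos
    rw [hdet] at this
    exact pow_ne_zero_iff two_ne_zero |>.mp this.ne'
  have hquad (u : ι → ℝ) : (star S * S) *ᵥ u ⬝ᵥ u = S *ᵥ u ⬝ᵥ S *ᵥ u := by
    rw [← mulVec_mulVec, star_eq_conjTranspose, conjTranspose_eq_transpose_of_trivial,
      mulVec_transpose, dotProduct_comm, dotProduct_mulVec, dotProduct_comm]
  simp only [hquad]
  rw [integral_comp_mulVec hS (g := fun v => exp (-(v ⬝ᵥ v))) (by fun_prop),
    integral_exp_neg_dotProduct_self, hdet, sqrt_div' _ (sq_nonneg _), sqrt_sq_eq_abs, smul_eq_mul,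
    inv_mul_eq_div]

end Gaussian

section Kernel
variable {N : ℕ} (Q B : Matrix (Fin N) (Fin N) ℝ)

lemma omegaN_pos (N : ℕ) : 0 < omegaN N :=
  ENNReal.toReal_pos (Metric.measure_ball_pos volume 0 one_pos).ne' measure_ball_lt_top.ne

lemma hV_nonneg (t : ℝ) : 0 ≤ hV Q B t :=
  mul_nonneg (omegaN_pos N).le (sqrt_nonneg _)

lemma hV_pos {t : ℝ} (ht : 0 < t) (hKt : (hK Q B t).PosDef) : 0 < hV Q B t :=
  mul_pos (omegaN_pos N) (sqrt_pos.mpr (hKt.smul ht).det_pos)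

lemma continuous_hkernel (X : Fin N → ℝ) (t : ℝ) : Continuous fun Y => hkernel Q B X Y t := by
  unfold hkernel hm
  fun_prop

lemma hkernel_nonneg (X Y : Fin N → ℝ) (t : ℝ) : 0 ≤ hkernel Q B X Y t := by
  have := omegaN_pos N
  have := hV_nonneg Q B t
  unfold hkernel
  positivity

lemma hkernel_le (X Y : Fin N → ℝ) {t : ℝ} (ht : 0 < t) :
    hkernel Q B X Y t ≤ (4 * π) ^ (-(N : ℝ) / 2) * omegaN N / hV Q B t := by
  have := omegaN_pos N
  have := hV_nonneg Q B t
  refine mul_le_of_le_one_right (by positivity) (exp_le_one_iff.mpr ?_)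
  have := sq_nonneg (hm Q B t X Y)
  exact div_nonpos_of_nonpos_of_nonneg (by linarith) (by linarith)

lemma hm_sq {t : ℝ} (hKt : (hK Q B t).PosDef) (X Y : Fin N → ℝ) :
    hm Q B t X Y ^ 2 = (hK Q B t)⁻¹ *ᵥ (Y - NormedSpace.exp (t • B) *ᵥ X) ⬝ᵥ
        (Y - NormedSpace.exp (t • B) *ᵥ X) := by
  rw [hm, sq_sqrt]
  simpa [dotProduct_comm] using
    hKt.inv.posSemidef.dotProduct_mulVec_nonneg (Y - NormedSpace.exp (t • B) *ᵥ X)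

lemma integral_exp_neg_mul_hm_sq {t c : ℝ} (ht : 0 < t) (hc : 0 < c) (hKt : (hK Q B t).PosDef)
    (X : Fin N → ℝ) :
    ∫ Y, exp (-(c * hm Q B t X Y ^ 2 / (4 * t))) = √((4 * π / c) ^ N) * hV Q B t / omegaN N := by
  set M := (c / (4 * t)) • (hK Q B t)⁻¹
  have hM : M.PosDef := hKt.inv.smul (by positivity)
  have hquad (Y : Fin N → ℝ) : c * hm Q B t X Y ^ 2 / (4 * t) =
      M *ᵥ (Y - NormedSpace.exp (t • B) *ᵥ X) ⬝ᵥ (Y - NormedSpace.exp (t • B) *ᵥ X) := by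
    rw [hm_sq Q B hKt, smul_mulVec, smul_dotProduct, smul_eq_mul]
    ring
  have hdet : π ^ N / M.det = (4 * π / c) ^ N * (t • hK Q B t).det := by
    have := hKt.det_pos
    simp only [M, det_smul, det_nonsing_inv, Ring.inverse_eq_inv', Fintype.card_fin, div_pow,
      mul_pow]
    field_simp
  simp only [hquad]
  rw [integral_sub_right_eq_self (fun u => exp (-(M *ᵥ u ⬝ᵥ u))),
    integral_exp_neg_mulVec_dotProduct hM, Fintype.card_fin, hdet, sqrt_mul (by positivity), hV]
  field_simp [(omegaN_pos N).ne']

lemma integral_hkernel_rpow {t q : ℝ} (ht : 0 < t) (hq : 0 < q) (hKt : (hK Q B t).PosDef)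
    (X : Fin N → ℝ) :
    ∫ Y, hkernel Q B X Y t ^ q = ((4 * π) ^ (-(N : ℝ) / 2) * omegaN N / hV Q B t) ^ q *
      (√((4 * π / q) ^ N) * hV Q B t / omegaN N) := by
  have := omegaN_pos N
  have := hV_pos Q B ht hKt
  have hpow (Y : Fin N → ℝ) : hkernel Q B X Y t ^ q =
      ((4 * π) ^ (-(N : ℝ) / 2) * omegaN N / hV Q B t) ^ q *
        exp (-(q * hm Q B t X Y ^ 2 / (4 * t))) := by
    rw [hkernel, mul_rpow (by positivity) (exp_pos _).le, ← exp_mul]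
    ring_nf
  simp only [hpow]
  rw [integral_const_mul, integral_exp_neg_mul_hm_sq Q B ht hq hKt]

lemma memLp_hkernel {t q : ℝ} (ht : 0 < t) (hq : 0 < q) (hKt : (hK Q B t).PosDef)
    (X : Fin N → ℝ) : MemLp (fun Y => hkernel Q B X Y t) (.ofReal q) := by
  have := omegaN_pos N
  have := hV_pos Q B ht hKt
  refine (integrable_norm_rpow_iff (continuous_hkernel Q B X t).aestronglyMeasurable
    (by simpa using hq) ENNReal.ofReal_ne_top).mp (.of_integral_ne_zero ?_)
  simp only [ENNReal.toReal_ofReal hq.le, norm_of_nonneg (hkernel_nonneg Q B X _ t),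
    integral_hkernel_rpow Q B ht hq hKt]
  positivity

lemma lpNorm_hkernel {t q : ℝ} (ht : 0 < t) (hq : 0 < q) (hKt : (hK Q B t).PosDef)
    (X : Fin N → ℝ) :
    lpNorm (fun Y => hkernel Q B X Y t) (.ofReal q) volume =
      (4 * π) ^ (-(N : ℝ) / 2) * omegaN N * (√((4 * π / q) ^ N) / omegaN N) ^ (1 / q) *
        hV Q B t ^ (1 / q - 1) := by
  have := omegaN_pos N
  have := hV_pos Q B ht hKt
  rw [lpNorm_eq_integral_norm_rpow_toReal (by simpa using hq) ENNReal.ofReal_ne_top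
    (continuous_hkernel Q B X t).aestronglyMeasurable]
  simp only [ENNReal.toReal_ofReal hq.le, norm_of_nonneg (hkernel_nonneg Q B X _ t),
    integral_hkernel_rpow Q B ht hq hKt]
  rw [mul_rpow (by positivity) (by positivity), rpow_rpow_inv (by positivity) hq.ne',
    mul_div_right_comm _ (hV Q B t), mul_rpow (y := hV Q B t) (by positivity) (by positivity),
    rpow_sub_one (by positivity), one_div]
  field_simp

end Kernel

section Holder
variable {α : Type*} [MeasurableSpace α] {μ : Measure α} {k f : α → ℝ}

lemma abs_integral_mul_le_lpNorm_mul_lpNorm {p q : ℝ} (hpq : p.HolderConjugate q)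
    (hk : MemLp k (.ofReal q) μ) (hf : MemLp f (.ofReal p) μ) :
    |∫ x, k x * f x ∂μ| ≤ lpNorm k (.ofReal q) μ * lpNorm f (.ofReal p) μ := by
  rw [lpNorm_eq_integral_norm_rpow_toReal (by simpa using hpq.symm.pos) ENNReal.ofReal_ne_top hk.1,
    lpNorm_eq_integral_norm_rpow_toReal (by simpa using hpq.pos) ENNReal.ofReal_ne_top hf.1,
    ENNReal.toReal_ofReal hpq.nonneg, ENNReal.toReal_ofReal hpq.symm.nonneg, ← one_div, ← one_div,
    ← norm_eq_abs]
  calc ‖∫ x, k x * f x ∂μ‖ ≤ ∫ x, ‖k x‖ * ‖f x‖ ∂μ := by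
        simpa only [norm_mul] using norm_integral_le_integral_norm (fun x => k x * f x)
    _ ≤ _ := integral_mul_norm_le_Lp_mul_Lq hpq.symm hk hf

lemma abs_integral_mul_le_mul_lpNorm_one {C : ℝ} (hkC : ∀ x, |k x| ≤ C) (hf : Integrable f μ) :
    |∫ x, k x * f x ∂μ| ≤ C * lpNorm f 1 μ := by
  rw [lpNorm_one_eq_integral_norm hf.1, ← integral_const_mul, ← norm_eq_abs]
  refine norm_integral_le_of_norm_le (hf.norm.const_mul C) (.of_forall fun x => ?_)
  rw [norm_mul, norm_eq_abs]
  exact mul_le_mul_of_nonneg_right (hkC x) (norm_nonneg _)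

end Holder

theorem hP_ultracontractive_general
    (N : ℕ) (Q B : Matrix (Fin N) (Fin N) ℝ)
    (hHor : ∀ t > 0, (hK Q B t).PosDef)
    (p : ℝ) (hp : 1 ≤ p) :
    ∃ c > (0:ℝ), ∀ f : (Fin N → ℝ) → ℝ, MemLp f (ENNReal.ofReal p) volume →
      ∀ X : Fin N → ℝ, ∀ t > (0:ℝ),
        |hP Q B t f X| ≤
          c * hV Q B t ^ (-(1 / p)) * (eLpNorm f (ENNReal.ofReal p) volume).toReal := by
  have := omegaN_pos N
  obtain rfl | hp1 := hp.eq_or_lt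
  · refine ⟨(4 * π) ^ (-(N : ℝ) / 2) * omegaN N, by positivity, fun f hf X t ht => ?_⟩
    rw [ENNReal.ofReal_one] at hf ⊢
    rw [toReal_eLpNorm hf.1, div_one, rpow_neg_one, ← div_eq_mul_inv]
    refine abs_integral_mul_le_mul_lpNorm_one (fun Y => ?_) (memLp_one_iff_integrable.mp hf)
    rw [abs_of_nonneg (hkernel_nonneg Q B X Y t)]
    exact hkernel_le Q B X Y ht
  · have hpq := Real.HolderConjugate.conjExponent hp1
    set q := p.conjExponent
    have hq := hpq.symm.pos
    refine ⟨(4 * π) ^ (-(N : ℝ) / 2) * omegaN N * (√((4 * π / q) ^ N) / omegaN N) ^ (1 / q),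
      by positivity, fun f hf X t ht => ?_⟩
    have h1q : 1 / q - 1 = -(1 / p) := by
      rw [one_div, one_div, ← hpq.inv_add_inv_eq_one]
      ring
    rw [toReal_eLpNorm hf.1, ← h1q, ← lpNorm_hkernel Q B ht hq (hHor t ht)]
    exact abs_integral_mul_le_lpNorm_mul_lpNorm hpq
      (memLp_hkernel Q B ht hq (hHor t ht) X) hf

/-- `Lᵖ → L^∞` ultracontractivity of the Hörmander semigroup. -/
theorem hP_ultracontractive
    (N : ℕ) (hN : 2 ≤ N) (Q B : Matrix (Fin N) (Fin N) ℝ)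
    (hQ : Q.PosSemidef)
    (hHor : ∀ t > 0, (hK Q B t).PosDef)
    (p : ℝ) (hp : 1 ≤ p) :
    ∃ c > (0:ℝ), ∀ f : (Fin N → ℝ) → ℝ, MemLp f (ENNReal.ofReal p) volume →
      ∀ X : Fin N → ℝ, ∀ t > (0:ℝ),
        |hP Q B t f X| ≤
          c * hV Q B t ^ (-(1 / p)) * (eLpNorm f (ENNReal.ofReal p) volume).toReal :=
  hP_ultracontractive_general N Q B hHor p hp
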